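/- arXiv:2502.17471 — 2 statements merged into one kernel-verified Lean document; each statement's English description precedes it below -/
import Mathlib

section
/- Let 0 < δ ≤ 1/4. There exists a constant c > 0 such that for every continuous positive function f : ℝ² → ℝ with the unit-circle mean value property, every z ∈ ℝ² and every unit vector τ ∈ ℝ² (|τ| = 1), the disk averages f_δ(w) = (1/(πδ²)) ∫_{D_δ(w)} f satisfy f_δ(z + τ) ≤ c · f_δ(z), where D_δ(w) denotes the closed disk of radius δ centered at w. -/
open Real MeasureTheory Set

lemma aux_angle_close {a b d : ℝ} (h : |a - b| ≤ d) :
    (Real.cos a - Real.cos b)^2 + (Real.sin a - Real.sin b)^2 ≤ d^2 := by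
  have h1 : 1 - (a-b)^2/2 ≤ Real.cos (a - b) := Real.one_sub_sq_div_two_le_cos
  have hd : 0 ≤ d := le_trans (abs_nonneg _) h
  have h2 : (a-b)^2 ≤ d^2 := sq_le_sq' (by linarith [abs_le.1 h]) (by linarith [abs_le.1 h])
  have hc : Real.cos (a-b) = Real.cos a * Real.cos b + Real.sin a * Real.sin b := Real.cos_sub a b
  nlinarith [Real.sin_sq_add_cos_sq a, Real.sin_sq_add_cos_sq b]

lemma aux_exists_sum_unit {q1 q2 : ℝ} (h1 : (9/16:ℝ) ≤ q1^2+q2^2) (h2 : q1^2+q2^2 ≤ 25/16) :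
    ∃ t s : ℝ, Real.cos t + Real.cos s = q1 ∧ Real.sin t + Real.sin s = q2 := by
  set r := Real.sqrt (q1^2+q2^2) with hr
  have hr2 : r^2 = q1^2+q2^2 := Real.sq_sqrt (by positivity)
  have hrub : r ≤ 5/4 := by
    have := Real.sqrt_le_sqrt h2
    calc r ≤ Real.sqrt (25/16) := this
    _ = Real.sqrt ((5/4)^2) := by norm_num
    _ = 5/4 := Real.sqrt_sq (by norm_num)
  have hrlb : (3/4:ℝ) ≤ r := by
    have : Real.sqrt (9/16) ≤ r := Real.sqrt_le_sqrt h1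
    calc (3/4:ℝ) = Real.sqrt ((3/4)^2) := (Real.sqrt_sq (by norm_num)).symm
    _ = Real.sqrt (9/16) := by norm_num
    _ ≤ r := this
  have hrpos : 0 < r := by linarith
  set ζ : ℂ := ⟨q1, q2⟩ with hζ
  have hζabs : ‖ζ‖ = r := by
    rw [Complex.norm_def, Complex.normSq_mk, hr]
    ring_nf
  have hζ0 : ζ ≠ 0 := by
    intro h0
    rw [h0] at hζabs
    simp at hζabs
    linarith
  set α := Complex.arg ζ with hα
  have hcosα : Real.cos α = q1 / r := by rw [hα, Complex.cos_arg hζ0, hζabs]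
  have hsinα : Real.sin α = q2 / r := by rw [hα, Complex.sin_arg, hζabs]
  set β := Real.arccos (r/2) with hβ
  have hcosβ : Real.cos β = r/2 := Real.cos_arccos (by linarith) (by linarith)
  refine ⟨α + β, α - β, ?_, ?_⟩
  · rw [Real.cos_add, Real.cos_sub, hcosα, hcosβ]
    field_simp
    ring
  · rw [Real.sin_add, Real.sin_sub, hsinα, hcosβ]
    field_simp
    ring

lemma aux_mod_two_pi (t : ℝ) : ∃ t' : ℝ, 0 ≤ t' ∧ t' < 2*π ∧
    Real.cos t' = Real.cos t ∧ Real.sin t' = Real.sin t := by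
  refine ⟨t - (⌊t / (2*π)⌋ : ℤ) * (2*π), ?_, ?_, ?_, ?_⟩
  · have h := Int.floor_le (t / (2*π))
    have h' := (le_div_iff₀ Real.two_pi_pos).1 h
    linarith
  · have h := Int.lt_floor_add_one (t / (2*π))
    have h' := (div_lt_iff₀ Real.two_pi_pos).1 h
    push_cast at h'
    linarith
  · exact Real.cos_periodic.sub_int_mul_eq _
  · exact Real.sin_periodic.sub_int_mul_eq _

lemma aux_interval {t' h : ℝ} (h0 : 0 ≤ t') (h2 : t' < 2*π) (hh0 : 0 < h) (hh : h ≤ 1) :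
    ∃ a : ℝ, 0 ≤ a ∧ a + h ≤ 2*π ∧ ∀ x ∈ Ioc a (a+h), |x - t'| ≤ h := by
  have hπ := Real.pi_gt_three
  by_cases hc : t' + h ≤ 2*π
  · exact ⟨t', h0, hc, fun x hx => abs_le.2 ⟨by linarith [hx.1], by linarith [hx.2]⟩⟩
  · refine ⟨t' - h, by linarith, by linarith, fun x hx => abs_le.2 ⟨by linarith [hx.1], by linarith [hx.2]⟩⟩

lemma aux_sum_sq {x1 x2 y1 y2 d : ℝ} (h1 : x1^2+y1^2 ≤ (d/4)^2) (h2 : x2^2+y2^2 ≤ (d/4)^2) :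
    (x1+x2)^2+(y1+y2)^2 ≤ d^2 := by
  nlinarith [sq_nonneg (x1-x2), sq_nonneg (y1-y2), sq_nonneg d]

lemma aux_sum_sq' {c1 c1' s1 s1' c2 c2' s2 s2' d : ℝ}
    (h1 : (c1'-c1)^2+(s1'-s1)^2 ≤ (d/4)^2) (h2 : (c2'-c2)^2+(s2'-s2)^2 ≤ (d/4)^2) :
    ((c1-c1')+(c2-c2'))^2 + ((s1-s1')+(s2-s2'))^2 ≤ d^2 := by
  have h1' : (c1-c1')^2+(s1-s1')^2 ≤ (d/4)^2 := by nlinarith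
  have h2' : (c2-c2')^2+(s2-s2')^2 ≤ (d/4)^2 := by nlinarith
  exact aux_sum_sq h1' h2'

lemma aux_r_lb {c s : ℝ} (h1 : -s ≤ c) (h3 : 0 ≤ s) (h4 : s ≤ 1/4) :
    (9/16:ℝ) ≤ 1 + 2*c + s^2 := by
  nlinarith [mul_nonneg (by linarith : (0:ℝ) ≤ 1/4 - s) (by linarith : (0:ℝ) ≤ 7/4 - s)]

lemma aux_r_ub {c s : ℝ} (h2 : c ≤ s) (h3 : 0 ≤ s) (h4 : s ≤ 1/4) :
    1 + 2*c + s^2 ≤ 25/16 := by nlinarith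

set_option maxHeartbeats 2000000 in
lemma aux_measure_lb (δ : ℝ) (hδpos : 0 < δ) (hδle : δ ≤ 1/4) (z τ u : ℝ × ℝ)
    (hτ : τ.1^2 + τ.2^2 = 1)
    (hu : (u.1-(z.1+τ.1))^2 + (u.2-(z.2+τ.2))^2 ≤ δ^2) :
    ENNReal.ofReal (δ^2/16) ≤
      (volume.restrict ((Ioc (0:ℝ) (2*π)) ×ˢ (Ioc (0:ℝ) (2*π))))
        {p : ℝ × ℝ | (u.1 - (z.1 + (Real.cos p.1 + Real.cos p.2)))^2
          + (u.2 - (z.2 + (Real.sin p.1 + Real.sin p.2)))^2 ≤ δ^2} := by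
  have hδ2 : δ^2 ≤ 1/16 := by nlinarith
  obtain ⟨a, ha⟩ : ∃ x : ℝ, x = u.1 - z.1 - τ.1 := ⟨_, rfl⟩
  obtain ⟨b, hb⟩ : ∃ x : ℝ, x = u.2 - z.2 - τ.2 := ⟨_, rfl⟩
  have hd : a^2 + b^2 ≤ δ^2 := by rw [ha, hb]; convert hu using 2 <;> ring
  obtain ⟨c, hc⟩ : ∃ x : ℝ, x = a*τ.1 + b*τ.2 := ⟨_, rfl⟩
  have hc2 : c^2 ≤ a^2 + b^2 := by
    have key : c^2 + (a*τ.2 - b*τ.1)^2 = (a^2+b^2) * (τ.1^2+τ.2^2) := by rw [hc]; ring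
    rw [hτ, mul_one] at key
    linarith [sq_nonneg (a*τ.2 - b*τ.1)]
  obtain ⟨s, hs⟩ : ∃ x : ℝ, x = Real.sqrt (a^2+b^2) := ⟨_, rfl⟩
  have hs0 : 0 ≤ s := hs ▸ Real.sqrt_nonneg _
  have hs2 : s^2 = a^2+b^2 := by rw [hs]; exact Real.sq_sqrt (by positivity)
  have hsle : s ≤ 1/4 := by
    rw [hs]
    calc Real.sqrt (a^2+b^2) ≤ Real.sqrt ((1/4)^2) := Real.sqrt_le_sqrt (by norm_num; linarith)
    _ = 1/4 := Real.sqrt_sq (by norm_num)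
  have hcabs : |c| ≤ s := by
    rw [← Real.sqrt_sq_eq_abs, hs]
    exact Real.sqrt_le_sqrt hc2
  have hcl := abs_le.1 hcabs
  have hexp : (u.1-z.1)^2 + (u.2-z.2)^2 = 1 + 2*c + (a^2+b^2) := by
    rw [hc, ha, hb]; linear_combination hτ
  have hlb : (9/16:ℝ) ≤ (u.1-z.1)^2 + (u.2-z.2)^2 := by
    rw [hexp, ← hs2]; exact aux_r_lb hcl.1 hs0 hsle
  have hub : (u.1-z.1)^2 + (u.2-z.2)^2 ≤ 25/16 := by
    rw [hexp, ← hs2]; exact aux_r_ub hcl.2 hs0 hsle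
  obtain ⟨t₁, s₁, hq1, hq2⟩ := aux_exists_sum_unit hlb hub
  obtain ⟨t₁', ht0, ht2, hct, hst⟩ := aux_mod_two_pi t₁
  obtain ⟨s₁', hs0', hs2', hcs, hss⟩ := aux_mod_two_pi s₁
  have hh0 : 0 < δ/4 := by linarith
  have hh1 : δ/4 ≤ 1 := by linarith
  obtain ⟨at', hat0, hat2, hatx⟩ := aux_interval ht0 ht2 hh0 hh1
  obtain ⟨as', has0, has2, hasx⟩ := aux_interval hs0' hs2' hh0 hh1
  have hSm : MeasurableSet {p : ℝ × ℝ | (u.1 - (z.1 + (Real.cos p.1 + Real.cos p.2)))^2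
          + (u.2 - (z.2 + (Real.sin p.1 + Real.sin p.2)))^2 ≤ δ^2} := by
    apply measurableSet_le _ measurable_const
    fun_prop
  have hRsub : (Ioc at' (at' + δ/4)) ×ˢ (Ioc as' (as' + δ/4)) ⊆
      {p : ℝ × ℝ | (u.1 - (z.1 + (Real.cos p.1 + Real.cos p.2)))^2
          + (u.2 - (z.2 + (Real.sin p.1 + Real.sin p.2)))^2 ≤ δ^2}
        ∩ ((Ioc (0:ℝ) (2*π)) ×ˢ (Ioc (0:ℝ) (2*π))) := by
    rintro ⟨p1, p2⟩ ⟨hp1, hp2⟩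
    constructor
    · have A1 := aux_angle_close (a := p1) (b := t₁') (hatx p1 hp1)
      have A2 := aux_angle_close (a := p2) (b := s₁') (hasx p2 hp2)
      rw [hct, hst] at A1
      rw [hcs, hss] at A2
      simp only [mem_setOf_eq]
      have e1 : u.1 - (z.1 + (Real.cos p1 + Real.cos p2)) =
          (Real.cos t₁ - Real.cos p1) + (Real.cos s₁ - Real.cos p2) := by
        linarith [hq1]
      have e2 : u.2 - (z.2 + (Real.sin p1 + Real.sin p2)) =
          (Real.sin t₁ - Real.sin p1) + (Real.sin s₁ - Real.sin p2) := by
        linarith [hq2]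
      rw [e1, e2]
      exact aux_sum_sq' A1 A2
    · exact ⟨⟨lt_of_le_of_lt hat0 hp1.1, le_trans hp1.2 hat2⟩,
        ⟨lt_of_le_of_lt has0 hp2.1, le_trans hp2.2 has2⟩⟩
  calc ENNReal.ofReal (δ^2/16)
      = volume ((Ioc at' (at' + δ/4)) ×ˢ (Ioc as' (as' + δ/4))) := by
        rw [Measure.volume_eq_prod, Measure.prod_prod, Real.volume_Ioc, Real.volume_Ioc]
        rw [show at' + δ/4 - at' = δ/4 by ring, show as' + δ/4 - as' = δ/4 by ring]
        rw [← ENNReal.ofReal_mul (by linarith)]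
        norm_num
        ring_nf
    _ ≤ volume ({p : ℝ × ℝ | (u.1 - (z.1 + (Real.cos p.1 + Real.cos p.2)))^2
          + (u.2 - (z.2 + (Real.sin p.1 + Real.sin p.2)))^2 ≤ δ^2}
          ∩ ((Ioc (0:ℝ) (2*π)) ×ˢ (Ioc (0:ℝ) (2*π)))) := measure_mono hRsub
    _ = (volume.restrict ((Ioc (0:ℝ) (2*π)) ×ˢ (Ioc (0:ℝ) (2*π))))
          {p : ℝ × ℝ | (u.1 - (z.1 + (Real.cos p.1 + Real.cos p.2)))^2
          + (u.2 - (z.2 + (Real.sin p.1 + Real.sin p.2)))^2 ≤ δ^2} :=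
        (Measure.restrict_apply hSm).symm


noncomputable def auxD (δ : ℝ) (w : ℝ × ℝ) : Set (ℝ × ℝ) := {x | (x.1-w.1)^2+(x.2-w.2)^2 ≤ δ^2}

noncomputable def auxE (p : ℝ × ℝ) : ℝ × ℝ := (Real.cos p.1 + Real.cos p.2, Real.sin p.1 + Real.sin p.2)

lemma auxE_continuous : Continuous auxE := by unfold auxE; fun_prop

lemma auxD_measurable (δ : ℝ) (w : ℝ × ℝ) : MeasurableSet (auxD δ w) := by
  apply measurableSet_le _ measurable_const
  fun_prop

lemma auxD_translate (δ : ℝ) (w v x : ℝ × ℝ) : x ∈ auxD δ w ↔ x + v ∈ auxD δ (w + v) := by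
  simp only [auxD, Set.mem_setOf_eq, Prod.fst_add, Prod.snd_add]
  rw [show x.1+v.1-(w.1+v.1) = x.1-w.1 from by ring, show x.2+v.2-(w.2+v.2) = x.2-w.2 from by ring]

lemma auxD_mem_iff (δ : ℝ) (z p u : ℝ × ℝ) : u ∈ auxD δ (z + auxE p) ↔
    (u.1 - (z.1 + (Real.cos p.1 + Real.cos p.2)))^2
      + (u.2 - (z.2 + (Real.sin p.1 + Real.sin p.2)))^2 ≤ δ^2 := by
  simp [auxD, auxE, Set.mem_setOf_eq, Prod.fst_add, Prod.snd_add]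

lemma auxD_compact (δ : ℝ) (hδ : 0 ≤ δ) (w : ℝ × ℝ) : IsCompact (auxD δ w) := by
  have hclosed : IsClosed (auxD δ w) := isClosed_le (by fun_prop) continuous_const
  have hsub : auxD δ w ⊆ Metric.closedBall w δ := by
    intro x hx
    have hx' : (x.1-w.1)^2+(x.2-w.2)^2 ≤ δ^2 := hx
    have hx1 : (x.1-w.1)^2 ≤ δ^2 := by nlinarith [sq_nonneg (x.2-w.2)]
    have hx2 : (x.2-w.2)^2 ≤ δ^2 := by nlinarith [sq_nonneg (x.1-w.1)]
    have h1 : |x.1-w.1| ≤ δ := by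
      have := Real.sqrt_le_sqrt hx1
      rwa [Real.sqrt_sq_eq_abs, Real.sqrt_sq hδ] at this
    have h2 : |x.2-w.2| ≤ δ := by
      have := Real.sqrt_le_sqrt hx2
      rwa [Real.sqrt_sq_eq_abs, Real.sqrt_sq hδ] at this
    rw [Metric.mem_closedBall, Prod.dist_eq]
    rw [Real.dist_eq, Real.dist_eq]
    exact max_le h1 h2
  exact (isCompact_closedBall w δ).of_isClosed_subset hclosed hsub

set_option maxHeartbeats 1000000 in
theorem aux_main (δ : ℝ) (hδpos : 0 < δ) (hδle : δ ≤ 1/4)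
    (f : ℝ × ℝ → ℝ) (hf : Continuous f) (hpos : ∀ x : ℝ × ℝ, 0 < f x)
    (hMVP : ∀ P : ℝ × ℝ, f P = (1 / (2 * π)) *
      ∫ t in (0 : ℝ)..(2 * π), f (P.1 + Real.cos t, P.2 + Real.sin t))
    (z τ : ℝ × ℝ) (hτ : τ.1 ^ 2 + τ.2 ^ 2 = 1) :
    ENNReal.ofReal ((1/(2*π))*(1/(2*π))*(δ^2/16)) * ∫⁻ u in auxD δ (z+τ), ENNReal.ofReal (f u)
      ≤ ∫⁻ x in auxD δ z, ENNReal.ofReal (f x) := by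
  have hπ := Real.pi_pos
  set W : ℝ × ℝ → ENNReal := fun x => ENNReal.ofReal (f x) with hW
  set c0 : ENNReal := ENNReal.ofReal (1/(2*π)) with hc0
  have hWm : Measurable W := ENNReal.measurable_ofReal.comp hf.measurable
  have hWtop : ∀ x, W x ≠ ⊤ := fun x => ENNReal.ofReal_ne_top
  have hc0top : c0 ≠ ⊤ := ENNReal.ofReal_ne_top
  have hc2top : c0^2 ≠ ⊤ := ENNReal.pow_ne_top hc0top
  -- one-step MVP in lintegral form
  have hL1 : ∀ P : ℝ × ℝ, W P = c0 * ∫⁻ t in Ioc (0:ℝ) (2*π), W (P.1 + Real.cos t, P.2 + Real.sin t) := by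
    intro P
    have hg : Continuous fun t : ℝ => f (P.1 + Real.cos t, P.2 + Real.sin t) := by fun_prop
    have hInt : IntegrableOn (fun t : ℝ => f (P.1 + Real.cos t, P.2 + Real.sin t)) (Ioc 0 (2*π)) :=
      hg.integrableOn_Ioc
    have h0 : (0:ℝ) ≤ 1/(2*π) := by positivity
    calc W P = ENNReal.ofReal (f P) := rfl
    _ = ENNReal.ofReal ((1/(2*π)) * ∫ t in (0:ℝ)..(2*π), f (P.1 + Real.cos t, P.2 + Real.sin t)) := by
        rw [← hMVP P]
    _ = c0 * ENNReal.ofReal (∫ t in (0:ℝ)..(2*π), f (P.1 + Real.cos t, P.2 + Real.sin t)) := by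
        rw [ENNReal.ofReal_mul h0]
    _ = c0 * ENNReal.ofReal (∫ t in Ioc (0:ℝ) (2*π), f (P.1 + Real.cos t, P.2 + Real.sin t)) := by
        rw [intervalIntegral.integral_of_le Real.two_pi_pos.le]
    _ = c0 * ∫⁻ t in Ioc (0:ℝ) (2*π), W (P.1 + Real.cos t, P.2 + Real.sin t) := by
        rw [MeasureTheory.ofReal_integral_eq_lintegral_ofReal hInt
          (Filter.Eventually.of_forall fun t => (hpos _).le)]
  -- two-step MVP
  have hL2 : ∀ P : ℝ × ℝ, W P = c0^2 *
      ∫⁻ p in (Ioc (0:ℝ) (2*π)) ×ˢ (Ioc (0:ℝ) (2*π)), W (P + auxE p) := by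
    intro P
    have key : ∀ t : ℝ, W (P.1 + Real.cos t, P.2 + Real.sin t)
        = c0 * ∫⁻ s in Ioc (0:ℝ) (2*π), W (P + auxE (t, s)) := by
      intro t
      rw [hL1 (P.1 + Real.cos t, P.2 + Real.sin t)]
      congr 1
      apply lintegral_congr
      intro s
      have he : ((P.1 + Real.cos t, P.2 + Real.sin t).1 + Real.cos s,
          (P.1 + Real.cos t, P.2 + Real.sin t).2 + Real.sin s) = P + auxE (t, s) := by
        apply Prod.ext
        · simp [auxE, Prod.fst_add]; ring
        · simp [auxE, Prod.snd_add]; ring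
      rw [he]
    have hmeas2 : Measurable fun p : ℝ × ℝ => W (P + auxE p) :=
      hWm.comp (continuous_const.add auxE_continuous).measurable
    have hprodm : ((volume : Measure ℝ).restrict (Ioc (0:ℝ) (2*π))).prod
        ((volume : Measure ℝ).restrict (Ioc (0:ℝ) (2*π)))
        = (volume : Measure (ℝ × ℝ)).restrict ((Ioc (0:ℝ) (2*π)) ×ˢ (Ioc (0:ℝ) (2*π))) := by
      rw [Measure.prod_restrict, ← Measure.volume_eq_prod]
    calc W P = c0 * ∫⁻ t in Ioc (0:ℝ) (2*π), W (P.1 + Real.cos t, P.2 + Real.sin t) := hL1 P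
    _ = c0 * ∫⁻ t in Ioc (0:ℝ) (2*π), (c0 * ∫⁻ s in Ioc (0:ℝ) (2*π), W (P + auxE (t, s))) :=
        by rw [lintegral_congr key]
    _ = c0 * (c0 * ∫⁻ t in Ioc (0:ℝ) (2*π), ∫⁻ s in Ioc (0:ℝ) (2*π), W (P + auxE (t, s))) := by
        rw [lintegral_const_mul' c0 _ hc0top]
    _ = c0^2 * ∫⁻ t in Ioc (0:ℝ) (2*π), ∫⁻ s in Ioc (0:ℝ) (2*π), W (P + auxE (t, s)) := by
        rw [← mul_assoc, ← pow_two]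
    _ = c0^2 * ∫⁻ p in (Ioc (0:ℝ) (2*π)) ×ˢ (Ioc (0:ℝ) (2*π)), W (P + auxE p) := by
        rw [← hprodm, lintegral_prod _ hmeas2.aemeasurable]
  have hDm := auxD_measurable δ
  -- swap x and p
  have hmeas3 : Measurable fun q : (ℝ × ℝ) × (ℝ × ℝ) => W (q.1 + auxE q.2) :=
    hWm.comp (measurable_fst.add (auxE_continuous.measurable.comp measurable_snd))
  have swap1 : ∫⁻ x in auxD δ z, W x
      = c0^2 * ∫⁻ p in (Ioc (0:ℝ) (2*π)) ×ˢ (Ioc (0:ℝ) (2*π)), ∫⁻ x in auxD δ z, W (x + auxE p) := by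
    calc ∫⁻ x in auxD δ z, W x
        = ∫⁻ x in auxD δ z, c0^2 *
            ∫⁻ p in (Ioc (0:ℝ) (2*π)) ×ˢ (Ioc (0:ℝ) (2*π)), W (x + auxE p) :=
          lintegral_congr fun x => hL2 x
    _ = c0^2 * ∫⁻ x in auxD δ z,
            ∫⁻ p in (Ioc (0:ℝ) (2*π)) ×ˢ (Ioc (0:ℝ) (2*π)), W (x + auxE p) :=
          lintegral_const_mul' _ _ hc2top
    _ = c0^2 * ∫⁻ p in (Ioc (0:ℝ) (2*π)) ×ˢ (Ioc (0:ℝ) (2*π)),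
            ∫⁻ x in auxD δ z, W (x + auxE p) := by
          rw [lintegral_lintegral_swap hmeas3.aemeasurable]
  -- translation
  have htrans : ∀ p : ℝ × ℝ, ∫⁻ x in auxD δ z, W (x + auxE p)
      = ∫⁻ u, (auxD δ (z + auxE p)).indicator W u := by
    intro p
    rw [← lintegral_indicator (hDm z)]
    have hfe : (fun x : ℝ × ℝ => (auxD δ z).indicator (fun y => W (y + auxE p)) x)
        = fun x : ℝ × ℝ => ((auxD δ (z + auxE p)).indicator W) (x + auxE p) := by
      funext x
      by_cases h : x ∈ auxD δ z
      · rw [Set.indicator_of_mem h, Set.indicator_of_mem ((auxD_translate δ z (auxE p) x).1 h)]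
      · rw [Set.indicator_of_notMem h,
          Set.indicator_of_notMem (fun hc => h ((auxD_translate δ z (auxE p) x).2 hc))]
    rw [hfe, lintegral_add_right_eq_self]
  -- swap p and u
  have hT : MeasurableSet {q : (ℝ × ℝ) × (ℝ × ℝ) |
      (q.2.1 - (z.1 + (Real.cos q.1.1 + Real.cos q.1.2)))^2
      + (q.2.2 - (z.2 + (Real.sin q.1.1 + Real.sin q.1.2)))^2 ≤ δ^2} := by
    apply measurableSet_le _ measurable_const
    fun_prop
  have huncurry : (Function.uncurry fun (p u : ℝ × ℝ) => (auxD δ (z + auxE p)).indicator W u)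
      = Set.indicator {q : (ℝ × ℝ) × (ℝ × ℝ) |
          (q.2.1 - (z.1 + (Real.cos q.1.1 + Real.cos q.1.2)))^2
          + (q.2.2 - (z.2 + (Real.sin q.1.1 + Real.sin q.1.2)))^2 ≤ δ^2}
        (fun q => W q.2) := by
    funext q
    show (auxD δ (z + auxE q.1)).indicator W q.2 = _
    by_cases h : q.2 ∈ auxD δ (z + auxE q.1)
    · rw [Set.indicator_of_mem h, Set.indicator_of_mem
        (show q ∈ {q : (ℝ × ℝ) × (ℝ × ℝ) |
          (q.2.1 - (z.1 + (Real.cos q.1.1 + Real.cos q.1.2)))^2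
          + (q.2.2 - (z.2 + (Real.sin q.1.1 + Real.sin q.1.2)))^2 ≤ δ^2}
          from (auxD_mem_iff δ z q.1 q.2).1 h)]
    · rw [Set.indicator_of_notMem h, Set.indicator_of_notMem
        (show q ∉ {q : (ℝ × ℝ) × (ℝ × ℝ) |
          (q.2.1 - (z.1 + (Real.cos q.1.1 + Real.cos q.1.2)))^2
          + (q.2.2 - (z.2 + (Real.sin q.1.1 + Real.sin q.1.2)))^2 ≤ δ^2}
          from fun hc => h ((auxD_mem_iff δ z q.1 q.2).2 hc))]
  have hmeas4 : Measurable (Function.uncurry fun (p u : ℝ × ℝ) =>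
      (auxD δ (z + auxE p)).indicator W u) := by
    rw [huncurry]
    exact (hWm.comp measurable_snd).indicator hT
  have swap2 : ∫⁻ p in (Ioc (0:ℝ) (2*π)) ×ˢ (Ioc (0:ℝ) (2*π)),
        ∫⁻ u, (auxD δ (z + auxE p)).indicator W u
      = ∫⁻ u, ∫⁻ p in (Ioc (0:ℝ) (2*π)) ×ˢ (Ioc (0:ℝ) (2*π)),
        (auxD δ (z + auxE p)).indicator W u :=
    lintegral_lintegral_swap hmeas4.aemeasurable
  -- inner integral as a measure
  have hSm : ∀ u : ℝ × ℝ, MeasurableSet {p : ℝ × ℝ |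
      (u.1 - (z.1 + (Real.cos p.1 + Real.cos p.2)))^2
      + (u.2 - (z.2 + (Real.sin p.1 + Real.sin p.2)))^2 ≤ δ^2} := by
    intro u
    apply measurableSet_le _ measurable_const
    fun_prop
  have hinner : ∀ u : ℝ × ℝ, ∫⁻ p in (Ioc (0:ℝ) (2*π)) ×ˢ (Ioc (0:ℝ) (2*π)),
        (auxD δ (z + auxE p)).indicator W u
      = W u * (volume.restrict ((Ioc (0:ℝ) (2*π)) ×ˢ (Ioc (0:ℝ) (2*π))))
          {p : ℝ × ℝ | (u.1 - (z.1 + (Real.cos p.1 + Real.cos p.2)))^2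
            + (u.2 - (z.2 + (Real.sin p.1 + Real.sin p.2)))^2 ≤ δ^2} := by
    intro u
    calc ∫⁻ p in (Ioc (0:ℝ) (2*π)) ×ˢ (Ioc (0:ℝ) (2*π)), (auxD δ (z + auxE p)).indicator W u
        = ∫⁻ p in (Ioc (0:ℝ) (2*π)) ×ˢ (Ioc (0:ℝ) (2*π)), W u *
            ({p : ℝ × ℝ | (u.1 - (z.1 + (Real.cos p.1 + Real.cos p.2)))^2
              + (u.2 - (z.2 + (Real.sin p.1 + Real.sin p.2)))^2 ≤ δ^2}).indicator 1 p := by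
          apply lintegral_congr
          intro p
          by_cases h : u ∈ auxD δ (z + auxE p)
          · rw [Set.indicator_of_mem h, Set.indicator_of_mem
              (show p ∈ {p : ℝ × ℝ | (u.1 - (z.1 + (Real.cos p.1 + Real.cos p.2)))^2
                + (u.2 - (z.2 + (Real.sin p.1 + Real.sin p.2)))^2 ≤ δ^2}
                from (auxD_mem_iff δ z p u).1 h), Pi.one_apply, mul_one]
          · rw [Set.indicator_of_notMem h, Set.indicator_of_notMem
              (show p ∉ {p : ℝ × ℝ | (u.1 - (z.1 + (Real.cos p.1 + Real.cos p.2)))^2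
                + (u.2 - (z.2 + (Real.sin p.1 + Real.sin p.2)))^2 ≤ δ^2}
                from fun hc => h ((auxD_mem_iff δ z p u).2 hc)), mul_zero]
      _ = W u * ∫⁻ p in (Ioc (0:ℝ) (2*π)) ×ˢ (Ioc (0:ℝ) (2*π)),
            ({p : ℝ × ℝ | (u.1 - (z.1 + (Real.cos p.1 + Real.cos p.2)))^2
              + (u.2 - (z.2 + (Real.sin p.1 + Real.sin p.2)))^2 ≤ δ^2}).indicator 1 p :=
          lintegral_const_mul' _ _ (hWtop u)
      _ = W u * (volume.restrict ((Ioc (0:ℝ) (2*π)) ×ˢ (Ioc (0:ℝ) (2*π))))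
            {p : ℝ × ℝ | (u.1 - (z.1 + (Real.cos p.1 + Real.cos p.2)))^2
              + (u.2 - (z.2 + (Real.sin p.1 + Real.sin p.2)))^2 ≤ δ^2} := by
          rw [lintegral_indicator_one (hSm u)]
  -- geometry lower bound
  have hgeom : ∀ u ∈ auxD δ (z + τ), ENNReal.ofReal (δ^2/16) ≤
      (volume.restrict ((Ioc (0:ℝ) (2*π)) ×ˢ (Ioc (0:ℝ) (2*π))))
        {p : ℝ × ℝ | (u.1 - (z.1 + (Real.cos p.1 + Real.cos p.2)))^2
          + (u.2 - (z.2 + (Real.sin p.1 + Real.sin p.2)))^2 ≤ δ^2} := by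
    intro u hu
    have hu' : (u.1 - (z.1 + τ.1))^2 + (u.2 - (z.2 + τ.2))^2 ≤ δ^2 := hu
    exact aux_measure_lb δ hδpos hδle z τ u hτ hu'
  -- assemble
  have hconst : ENNReal.ofReal ((1/(2*π))*(1/(2*π))*(δ^2/16))
      = c0^2 * ENNReal.ofReal (δ^2/16) := by
    have h2 : c0^2 = ENNReal.ofReal ((1/(2*π))*(1/(2*π))) := by
      rw [hc0, sq, ← ENNReal.ofReal_mul (by positivity)]
    rw [h2, ← ENNReal.ofReal_mul (by positivity)]
  calc ENNReal.ofReal ((1/(2*π))*(1/(2*π))*(δ^2/16)) * ∫⁻ u in auxD δ (z+τ), W u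
      = c0^2 * ∫⁻ u in auxD δ (z+τ), W u * ENNReal.ofReal (δ^2/16) := by
        rw [hconst, lintegral_mul_const' _ _ ENNReal.ofReal_ne_top, mul_assoc,
          mul_comm (ENNReal.ofReal (δ^2/16))]
    _ ≤ c0^2 * ∫⁻ u in auxD δ (z+τ), W u *
          (volume.restrict ((Ioc (0:ℝ) (2*π)) ×ˢ (Ioc (0:ℝ) (2*π))))
            {p : ℝ × ℝ | (u.1 - (z.1 + (Real.cos p.1 + Real.cos p.2)))^2
              + (u.2 - (z.2 + (Real.sin p.1 + Real.sin p.2)))^2 ≤ δ^2} := by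
        refine mul_le_mul_right (setLIntegral_mono' (hDm _) fun u hu => ?_) _
        exact mul_le_mul_right (hgeom u hu) _
    _ ≤ c0^2 * ∫⁻ u, W u *
          (volume.restrict ((Ioc (0:ℝ) (2*π)) ×ˢ (Ioc (0:ℝ) (2*π))))
            {p : ℝ × ℝ | (u.1 - (z.1 + (Real.cos p.1 + Real.cos p.2)))^2
              + (u.2 - (z.2 + (Real.sin p.1 + Real.sin p.2)))^2 ≤ δ^2} :=
        mul_le_mul_right (setLIntegral_le_lintegral _ _) _
    _ = c0^2 * ∫⁻ u, ∫⁻ p in (Ioc (0:ℝ) (2*π)) ×ˢ (Ioc (0:ℝ) (2*π)),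
          (auxD δ (z + auxE p)).indicator W u := by
        rw [lintegral_congr fun u => (hinner u).symm]
    _ = c0^2 * ∫⁻ p in (Ioc (0:ℝ) (2*π)) ×ˢ (Ioc (0:ℝ) (2*π)),
          ∫⁻ u, (auxD δ (z + auxE p)).indicator W u := by rw [← swap2]
    _ = c0^2 * ∫⁻ p in (Ioc (0:ℝ) (2*π)) ×ˢ (Ioc (0:ℝ) (2*π)),
          ∫⁻ x in auxD δ z, W (x + auxE p) := by
        rw [lintegral_congr fun p => (htrans p).symm]
    _ = ∫⁻ x in auxD δ z, W x := swap1.symm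

/-- For every `0 < δ ≤ 1/4` there is a constant `c > 0` such that for every positive
continuous function `f` on the plane with the unit-circle mean value property, every
point `z` and every unit vector `τ`, the `δ`-disk averages of `f` satisfy
`f_δ (z + τ) ≤ c * f_δ z`. (Disks are Euclidean, integrals are with respect to
two-dimensional Lebesgue measure.) -/
theorem mvp_disk_average_harnack (δ : ℝ) (hδpos : 0 < δ) (hδle : δ ≤ 1 / 4) :
    ∃ c : ℝ, 0 < c ∧ ∀ f : ℝ × ℝ → ℝ, Continuous f → (∀ x : ℝ × ℝ, 0 < f x) →
      (∀ P : ℝ × ℝ, f P = (1 / (2 * π)) *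
        ∫ t in (0 : ℝ)..(2 * π), f (P.1 + Real.cos t, P.2 + Real.sin t)) →
      ∀ z τ : ℝ × ℝ, τ.1 ^ 2 + τ.2 ^ 2 = 1 →
        (1 / (π * δ ^ 2)) *
            (∫ x in {x : ℝ × ℝ |
              (x.1 - (z.1 + τ.1)) ^ 2 + (x.2 - (z.2 + τ.2)) ^ 2 ≤ δ ^ 2}, f x) ≤
          c * ((1 / (π * δ ^ 2)) *
            ∫ x in {x : ℝ × ℝ | (x.1 - z.1) ^ 2 + (x.2 - z.2) ^ 2 ≤ δ ^ 2}, f x) := by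
  have hπ := Real.pi_pos
  refine ⟨((1/(2*π))*(1/(2*π))*(δ^2/16))⁻¹, by positivity, ?_⟩
  intro f hf hpos hMVP z τ hτ
  have hmain := aux_main δ hδpos hδle f hf hpos hMVP z τ hτ
  have hint : ∀ w : ℝ × ℝ, IntegrableOn f (auxD δ w) := fun w =>
    hf.continuousOn.integrableOn_compact (auxD_compact δ hδpos.le w)
  have hfin : (∫⁻ x in auxD δ z, ENNReal.ofReal (f x)) ≠ ⊤ :=
    (Integrable.lintegral_lt_top (hint z)).ne
  have hIeq : ∀ w : ℝ × ℝ, ∫ x in auxD δ w, f x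
      = (∫⁻ x in auxD δ w, ENNReal.ofReal (f x)).toReal := fun w =>
    integral_eq_lintegral_of_nonneg_ae (Filter.Eventually.of_forall fun x => (hpos x).le)
      hf.aestronglyMeasurable.restrict
  have hset1 : {x : ℝ × ℝ | (x.1 - (z.1 + τ.1)) ^ 2 + (x.2 - (z.2 + τ.2)) ^ 2 ≤ δ ^ 2}
      = auxD δ (z + τ) := rfl
  have hset2 : {x : ℝ × ℝ | (x.1 - z.1) ^ 2 + (x.2 - z.2) ^ 2 ≤ δ ^ 2} = auxD δ z := rfl
  rw [hset1, hset2, hIeq (z+τ), hIeq z]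
  have h1 := ENNReal.toReal_mono hfin hmain
  rw [ENNReal.toReal_mul, ENNReal.toReal_ofReal (by positivity)] at h1
  have hκ : (0:ℝ) < (1/(2*π))*(1/(2*π))*(δ^2/16) := by positivity
  have hA : (0:ℝ) ≤ (∫⁻ x in auxD δ (z+τ), ENNReal.ofReal (f x)).toReal := ENNReal.toReal_nonneg
  have h2 : (∫⁻ x in auxD δ (z+τ), ENNReal.ofReal (f x)).toReal
      ≤ ((1/(2*π))*(1/(2*π))*(δ^2/16))⁻¹ * (∫⁻ x in auxD δ z, ENNReal.ofReal (f x)).toReal := by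
    rw [← inv_mul_cancel_left₀ hκ.ne' ((∫⁻ x in auxD δ (z+τ), ENNReal.ofReal (f x)).toReal)]
    exact mul_le_mul_of_nonneg_left h1 (by positivity)
  calc (1 / (π * δ ^ 2)) * (∫⁻ x in auxD δ (z+τ), ENNReal.ofReal (f x)).toReal
      ≤ (1 / (π * δ ^ 2)) * (((1/(2*π))*(1/(2*π))*(δ^2/16))⁻¹ *
          (∫⁻ x in auxD δ z, ENNReal.ofReal (f x)).toReal) :=
        mul_le_mul_of_nonneg_left h2 (by positivity)
    _ = ((1/(2*π))*(1/(2*π))*(δ^2/16))⁻¹ * ((1 / (π * δ ^ 2)) *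
          (∫⁻ x in auxD δ z, ENNReal.ofReal (f x)).toReal) := by ring
end

section
/- If a function f : ℤ² → ℝ satisfies the discrete mean value property and f(i,j) → ∞ as i² + j² → ∞ (i.e. for every M there is an R such that f(i,j) ≥ M whenever i² + j² ≥ R), then no such f exists; equivalently, a function with the discrete mean value property on ℤ² cannot tend to infinity. More generally, if f has the discrete mean value property and has a finite limit α as i² + j² → ∞, then f is identically equal to α. -/
/-- A function on the integer lattice has the discrete mean value property if each of
its values equals the average of its values at the four neighboring lattice points. -/
def DiscreteMVP (f : ℤ × ℤ → ℝ) : Prop :=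
  ∀ i j : ℤ, f (i, j) =
    (f (i - 1, j) + f (i + 1, j) + f (i, j - 1) + f (i, j + 1)) / 4

/-- If an MVP function attains a global minimum, it is constant. -/
lemma mvp_min_const (f : ℤ × ℤ → ℝ) (hf : DiscreteMVP f) (q : ℤ × ℤ)
    (hq : ∀ x, f q ≤ f x) : ∀ p, f p = f q := by
  have step : ∀ i j : ℤ, f (i, j) = f q →
      f (i - 1, j) = f q ∧ f (i + 1, j) = f q ∧ f (i, j - 1) = f q ∧ f (i, j + 1) = f q := by
    intro i j h
    have h1 := hq (i - 1, j); have h2 := hq (i + 1, j)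
    have h3 := hq (i, j - 1); have h4 := hq (i, j + 1)
    have h5 := hf i j
    exact ⟨by linarith, by linarith, by linarith, by linarith⟩
  have hrow : ∀ a : ℤ, f (q.1 + a, q.2) = f q := by
    intro a
    induction a using Int.induction_on with
    | zero => simp
    | succ n ih =>
        have := (step _ _ ih).2.1
        have e : q.1 + ((n : ℤ) + 1) = q.1 + n + 1 := by ring
        rw [e]; exact this
    | pred n ih =>
        have := (step _ _ ih).1
        have e : q.1 + (-(n : ℤ) - 1) = q.1 + -(n : ℤ) - 1 := by ring
        rw [e]; exact this
  have hall : ∀ a b : ℤ, f (q.1 + a, q.2 + b) = f q := by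
    intro a b
    induction b using Int.induction_on with
    | zero => simpa using hrow a
    | succ n ih =>
        have := (step _ _ ih).2.2.2
        have e : q.2 + ((n : ℤ) + 1) = q.2 + n + 1 := by ring
        rw [e]; exact this
    | pred n ih =>
        have := (step _ _ ih).2.2.1
        have e : q.2 + (-(n : ℤ) - 1) = q.2 + -(n : ℤ) - 1 := by ring
        rw [e]; exact this
  intro p
  have := hall (p.1 - q.1) (p.2 - q.2)
  simpa using this

/-- If `f` is eventually at least `C` and takes a value at most `C`,
then it attains a global minimum. -/
lemma exists_global_min (f : ℤ × ℤ → ℝ) (R C : ℝ) (p0 : ℤ × ℤ)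
    (hC : ∀ i j : ℤ, R ≤ (i : ℝ) ^ 2 + (j : ℝ) ^ 2 → C ≤ f (i, j))
    (hp0 : f p0 ≤ C) : ∃ q, ∀ x, f q ≤ f x := by
  obtain ⟨N, hN1, hN2, hN3⟩ : ∃ N : ℕ, R ≤ (N : ℝ) ∧ p0.1.natAbs ≤ N ∧ p0.2.natAbs ≤ N := by
    refine ⟨⌈R⌉₊ + p0.1.natAbs + p0.2.natAbs, ?_, by omega, by omega⟩
    have h1 : R ≤ (⌈R⌉₊ : ℝ) := Nat.le_ceil R
    have h2 : (⌈R⌉₊ : ℝ) ≤ ((⌈R⌉₊ + p0.1.natAbs + p0.2.natAbs : ℕ) : ℝ) := by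
      exact_mod_cast (by omega : ⌈R⌉₊ ≤ ⌈R⌉₊ + p0.1.natAbs + p0.2.natAbs)
    linarith
  set s : Finset (ℤ × ℤ) := Finset.Icc (-(N : ℤ), -(N : ℤ)) ((N : ℤ), (N : ℤ)) with hsdef
  have hp0s : p0 ∈ s := by
    simp only [hsdef, Finset.mem_Icc, Prod.le_def]
    constructor
    · constructor
      · have := Int.natAbs_le_iff_sq_le.mp (le_refl p0.1.natAbs)
        omega
      · omega
    · constructor
      · omega
      · omega
  obtain ⟨q, hqs, hq⟩ := s.exists_min_image f ⟨p0, hp0s⟩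
  refine ⟨q, fun x => ?_⟩
  by_cases hx : x ∈ s
  · exact hq x hx
  · have hout : ((N : ℤ) + 1 ≤ |x.1|) ∨ ((N : ℤ) + 1 ≤ |x.2|) := by
      rw [Int.abs_eq_natAbs, Int.abs_eq_natAbs]
      simp only [hsdef, Finset.mem_Icc, Prod.le_def, not_and_or, not_le] at hx
      omega
    have hRle : R ≤ (N : ℝ) := hN1
    have hfar : R ≤ (x.1 : ℝ) ^ 2 + (x.2 : ℝ) ^ 2 := by
      rcases hout with h | h
      · have h' : (N : ℝ) + 1 ≤ |(x.1 : ℝ)| := by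
          have h2 : (((N : ℤ) + 1 : ℤ) : ℝ) ≤ ((|x.1| : ℤ) : ℝ) := by exact_mod_cast h
          rw [Int.cast_abs] at h2
          push_cast at h2
          linarith
        have habs : |(x.1 : ℝ)| ^ 2 = (x.1 : ℝ) ^ 2 := sq_abs _
        have hN0 : (0 : ℝ) ≤ (N : ℝ) := Nat.cast_nonneg N
        nlinarith [sq_nonneg ((x.2 : ℝ)), abs_nonneg ((x.1 : ℝ))]
      · have h' : (N : ℝ) + 1 ≤ |(x.2 : ℝ)| := by
          have h2 : (((N : ℤ) + 1 : ℤ) : ℝ) ≤ ((|x.2| : ℤ) : ℝ) := by exact_mod_cast h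
          rw [Int.cast_abs] at h2
          push_cast at h2
          linarith
        have habs : |(x.2 : ℝ)| ^ 2 = (x.2 : ℝ) ^ 2 := sq_abs _
        have hN0 : (0 : ℝ) ≤ (N : ℝ) := Nat.cast_nonneg N
        nlinarith [sq_nonneg ((x.1 : ℝ)), abs_nonneg ((x.2 : ℝ))]
    have hfx : C ≤ f x := by
      have := hC x.1 x.2 hfar
      simpa using this
    calc f q ≤ f p0 := hq p0 hp0s
      _ ≤ C := hp0
      _ ≤ f x := hfx

/-- An MVP function tending to 0 at infinity cannot take a negative value. -/
lemma mvp_aux (g : ℤ × ℤ → ℝ) (hg : DiscreteMVP g)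
    (hlim : ∀ ε : ℝ, 0 < ε → ∃ R : ℝ, ∀ i j : ℤ,
      R ≤ (i : ℝ) ^ 2 + (j : ℝ) ^ 2 → |g (i, j)| < ε)
    (p : ℤ × ℤ) (hp : g p < 0) : False := by
  obtain ⟨R, hR⟩ := hlim (-g p / 2) (by linarith)
  have hmin : ∃ q, ∀ x, g q ≤ g x := by
    refine exists_global_min g R (g p) p (fun i j h => ?_) le_rfl
    have := hR i j h
    rw [abs_lt] at this
    linarith
  obtain ⟨q, hq⟩ := hmin
  have hqneg : g q < 0 := lt_of_le_of_lt (hq p) hp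
  have hconst := mvp_min_const g hg q hq
  obtain ⟨R', hR'⟩ := hlim (-g q) (by linarith)
  set n : ℕ := ⌈max R' 0⌉₊ + 1 with hndef
  have hfar : R' ≤ ((n : ℤ) : ℝ) ^ 2 + ((0 : ℤ) : ℝ) ^ 2 := by
    have h1 : max R' 0 ≤ (⌈max R' 0⌉₊ : ℝ) := Nat.le_ceil _
    have h2 : (⌈max R' 0⌉₊ : ℝ) + 1 = (n : ℝ) := by
      rw [hndef]; push_cast; ring
    have h3 : (1 : ℝ) ≤ (n : ℝ) := by
      have : 1 ≤ n := Nat.le_add_left 1 _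
      exact_mod_cast this
    have h4 : R' ≤ (n : ℝ) := by
      have := le_max_left R' 0
      linarith
    have h5 : (n : ℝ) ≤ (n : ℝ) ^ 2 := by nlinarith
    push_cast
    nlinarith
  have := hR' (n : ℤ) 0 hfar
  rw [hconst ((n : ℤ), 0)] at this
  rw [abs_of_neg hqneg] at this
  linarith

/-- No function with the discrete mean value property on `ℤ²` can tend to infinity;
more generally, a function with the discrete mean value property having a finite limit
`α` at infinity is identically equal to `α`. -/
theorem discrete_mvp_limit_at_infinity :
    (¬ ∃ f : ℤ × ℤ → ℝ, DiscreteMVP f ∧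
      ∀ M : ℝ, ∃ R : ℝ, ∀ i j : ℤ, R ≤ (i : ℝ) ^ 2 + (j : ℝ) ^ 2 → M ≤ f (i, j)) ∧
    (∀ f : ℤ × ℤ → ℝ, ∀ α : ℝ, DiscreteMVP f →
      (∀ ε : ℝ, 0 < ε → ∃ R : ℝ, ∀ i j : ℤ,
        R ≤ (i : ℝ) ^ 2 + (j : ℝ) ^ 2 → |f (i, j) - α| < ε) →
      ∀ p : ℤ × ℤ, f p = α) := by
  constructor
  · rintro ⟨f, hf, hlim⟩
    obtain ⟨R, hR⟩ := hlim (f (0, 0))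
    obtain ⟨q, hq⟩ := exists_global_min f R (f (0, 0)) (0, 0) hR le_rfl
    have hconst := mvp_min_const f hf q hq
    obtain ⟨R', hR'⟩ := hlim (f q + 1)
    set n : ℕ := ⌈max R' 0⌉₊ + 1 with hndef
    have hfar : R' ≤ ((n : ℤ) : ℝ) ^ 2 + ((0 : ℤ) : ℝ) ^ 2 := by
      have h1 : max R' 0 ≤ (⌈max R' 0⌉₊ : ℝ) := Nat.le_ceil _
      have h3 : (1 : ℝ) ≤ (n : ℝ) := by
        have : 1 ≤ n := Nat.le_add_left 1 _
        exact_mod_cast this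
      have h2 : (⌈max R' 0⌉₊ : ℝ) + 1 = (n : ℝ) := by
        rw [hndef]; push_cast; ring
      have h4 : R' ≤ (n : ℝ) := by
        have := le_max_left R' 0
        linarith
      have h5 : (n : ℝ) ≤ (n : ℝ) ^ 2 := by nlinarith
      push_cast
      nlinarith
    have := hR' (n : ℤ) 0 hfar
    rw [hconst ((n : ℤ), 0)] at this
    linarith
  · intro f α hf hlim p
    by_contra hne
    rcases lt_or_gt_of_ne hne with hlt | hgt
    · -- f p < α : use g = f - α
      have : False := by
        refine mvp_aux (fun x => f x - α) ?_ ?_ p (by simpa using sub_neg.mpr hlt)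
        · intro i j
          have := hf i j
          simp only
          linarith
        · intro ε hε
          obtain ⟨R, hR⟩ := hlim ε hε
          exact ⟨R, fun i j h => hR i j h⟩
      exact this
    · -- f p > α : use g = α - f
      have : False := by
        refine mvp_aux (fun x => α - f x) ?_ ?_ p (by simpa using sub_neg.mpr hgt)
        · intro i j
          have := hf i j
          simp only
          linarith
        · intro ε hε
          obtain ⟨R, hR⟩ := hlim ε hε
          refine ⟨R, fun i j h => ?_⟩
          have := hR i j h
          simpa [abs_sub_comm] using this
      exact this
end
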